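/- For every signed graph Ĝ with no negative loop, there exists a signed graph H̃ with no negative loop (but possibly positive loops), in which every pair of distinct adjacent vertices is joined by both a positive and a negative edge (a digon), such that H̃ is simultaneously a minor of Ĝ and a homomorphic image of Ĝ. -/

import Mathlib

/-- A signed (multi)graph: an edge set with endpoints (an unordered pair,
possibly a loop) and a sign for each edge (`neg e = true` means `e` is negative). -/
structure SGraph (V : Type) where
  E : Type
  ends : E → Sym2 V
  neg : E → Bool

namespace SGraph

variable {V W : Type}

/-- Walks in a signed multigraph, recorded as sequences of edges. -/
inductive Walk (G : SGraph V) : V → V → Type where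
  | nil {v : V} : Walk G v v
  | cons {u v w : V} (e : G.E) (h : G.ends e = s(u, v)) (p : Walk G v w) : Walk G u w

namespace Walk

variable {G : SGraph V}

/-- The list of edges of a walk. -/
def edges : {u v : V} → G.Walk u v → List G.E
  | _, _, .nil => []
  | _, _, .cons e _ p => e :: p.edges

/-- The list of vertices visited by a walk (in order, with repetitions). -/
def support : {u v : V} → G.Walk u v → List V
  | u, _, .nil => [u]
  | u, _, .cons _ _ p => u :: p.support

/-- A walk is negative if it uses an odd number of negative edges
(its sign, the product of the signs of its edges with multiplicity, is `-1`). -/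
def isNeg {u v : V} (p : G.Walk u v) : Bool :=
  (p.edges.map G.neg).foldr Bool.xor false

/-- A closed walk is a cycle if it has at least one edge, no repeated edge,
and no repeated vertex (except the initial vertex which is also final). -/
def IsCycle {v : V} (p : G.Walk v v) : Prop :=
  p.edges ≠ [] ∧ p.edges.Nodup ∧ p.support.tail.Nodup

/-- The internal vertices of a walk. -/
def inner {u v : V} (p : G.Walk u v) : List V :=
  p.support.tail.dropLast

end Walk

/-- A set of vertices is balanced if it induces no negative cycle. -/
def BalancedSet (G : SGraph V) (X : Set V) : Prop :=
  ∀ (v : V) (p : G.Walk v v), p.IsCycle → (∀ u ∈ p.support, u ∈ X) → p.isNeg = false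

/-- A signed graph is balanced if it contains no negative cycle. -/
def IsBalanced (G : SGraph V) : Prop := G.BalancedSet Set.univ

/-- The signed graph has a negative loop. -/
def HasNegLoop (G : SGraph V) : Prop :=
  ∃ e : G.E, (∃ v : V, G.ends e = s(v, v)) ∧ G.neg e = true

/-- The signed graph has a positive loop. -/
def HasPosLoop (G : SGraph V) : Prop :=
  ∃ e : G.E, (∃ v : V, G.ends e = s(v, v)) ∧ G.neg e = false

/-- A balanced `k`-coloring: a partition of the vertices into `k` balanced color classes. -/
def ColorableB (G : SGraph V) (k : ℕ) : Prop :=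
  ∃ c : V → Fin k, ∀ i : Fin k, G.BalancedSet {v | c v = i}

/-- The balanced chromatic number. -/
noncomputable def chromNumB (G : SGraph V) : ℕ∞ :=
  ⨅ n ∈ {n : ℕ | G.ColorableB n}, (n : ℕ∞)

/-- Switching at the set of vertices where `s` is `true`: the sign of an edge is
multiplied by `-1` once for each of its endpoints (with multiplicity) in the set;
thus an edge with exactly one endpoint in the set changes sign, and loops are unchanged. -/
def switch (G : SGraph V) (s : V → Bool) : SGraph V where
  E := G.E
  ends := G.ends
  neg e := Bool.xor (G.neg e)
    (Sym2.lift ⟨fun u v => Bool.xor (s u) (s v), fun u v => Bool.xor_comm _ _⟩ (G.ends e))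

/-- The negation of a signature. -/
def negate (G : SGraph V) : SGraph V where
  E := G.E
  ends := G.ends
  neg e := !(G.neg e)

/-- A set of vertices is connected via positive edges inside itself. -/
def PosConnected (G : SGraph V) (B : Set V) : Prop :=
  B.Nonempty ∧ ∀ u ∈ B, ∀ v ∈ B, ∃ p : G.Walk u v,
    (∀ x ∈ p.support, x ∈ B) ∧ ∀ e ∈ p.edges, G.neg e = false

/-- `H` is a minor of `G`: after a suitable switching of `G`, there are disjoint
branch sets (each connected via positive edges) for the vertices of `H`, and
distinct edges of `G`, with the correct signs, realizing the edges of `H`. -/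
def IsMinor (H : SGraph W) (G : SGraph V) : Prop :=
  ∃ s : V → Bool, ∃ B : W → Set V,
    (∀ x : W, (G.switch s).PosConnected (B x)) ∧
    (Pairwise fun x y => Disjoint (B x) (B y)) ∧
    ∃ η : H.E → G.E, Function.Injective η ∧
      ∀ (e : H.E) (x y : W), H.ends e = s(x, y) →
        (G.switch s).neg (η e) = H.neg e ∧
        ∃ u v : V, G.ends (η e) = s(u, v) ∧ u ∈ B x ∧ v ∈ B y

/-- A homomorphism of signed graphs: after a suitable switching of the source,
a map of vertices and edges preserving incidences and signs. -/
def HomTo (G : SGraph V) (H : SGraph W) : Prop :=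
  ∃ s : V → Bool, ∃ f : V → W, ∃ g : G.E → H.E,
    ∀ (e : G.E) (u v : V), G.ends e = s(u, v) →
      H.ends (g e) = s(f u, f v) ∧ H.neg (g e) = (G.switch s).neg e

/-- A subdivision of `H` is isomorphic to a subgraph of `G` (signs ignored):
an injection of the vertices of `H` together with internally disjoint,
edge-disjoint paths of `G` realizing the edges of `H`. -/
def IsSubdivisionOf (H : SGraph W) (G : SGraph V) : Prop :=
  ∃ (φ : W → V) (ep : H.E → W × W),
    Function.Injective φ ∧
    (∀ e : H.E, H.ends e = s((ep e).1, (ep e).2)) ∧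
    ∃ P : (e : H.E) → G.Walk (φ (ep e).1) (φ (ep e).2),
      (∀ e, (P e).support.Nodup) ∧
      (∀ e f, e ≠ f → ∀ x ∈ (P e).inner, x ∉ (P f).support) ∧
      (∀ e, ∀ x ∈ (P e).inner, x ∉ Set.range φ) ∧
      (∀ e f, e ≠ f → ∀ g ∈ (P e).edges, g ∉ (P f).edges)

/-- `H` is a total topological minor of `G`: a subdivision of `H` occurs as a
subgraph of `G` in which the path representing each edge `e` of `H` has sign
exactly the sign of `e`. -/
def IsTotalTopMinor (H : SGraph W) (G : SGraph V) : Prop :=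
  ∃ (φ : W → V) (ep : H.E → W × W),
    Function.Injective φ ∧
    (∀ e : H.E, H.ends e = s((ep e).1, (ep e).2)) ∧
    ∃ P : (e : H.E) → G.Walk (φ (ep e).1) (φ (ep e).2),
      (∀ e, (P e).support.Nodup) ∧
      (∀ e f, e ≠ f → ∀ x ∈ (P e).inner, x ∉ (P f).support) ∧
      (∀ e, ∀ x ∈ (P e).inner, x ∉ Set.range φ) ∧
      (∀ e f, e ≠ f → ∀ g ∈ (P e).edges, g ∉ (P f).edges) ∧
      (∀ e, (P e).isNeg = H.neg e)

/-- `H` is a topological minor of `G`: some subdivision of `H` occurs as a subgraph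
of `G` in which every cycle of `H` keeps its sign; equivalently, after a suitable
switching of `H`, `H` is a total topological minor of `G`. -/
def IsTopMinor (H : SGraph W) (G : SGraph V) : Prop :=
  ∃ s : W → Bool, (H.switch s).IsTotalTopMinor G

end SGraph

open SGraph

/-- The signed graph `G̃` obtained from a graph `G` by replacing each edge by a
pair of parallel edges, one positive and one negative. -/
def SimpleGraph.tildeS {V : Type} (G : SimpleGraph V) : SGraph V where
  E := G.edgeSet × Bool
  ends e := (e.1 : Sym2 V)
  neg e := e.2

/-- The all-negative signed graph `(G, -)` on a graph `G`. -/
def SimpleGraph.allNeg {V : Type} (G : SimpleGraph V) : SGraph V where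
  E := G.edgeSet
  ends e := (e : Sym2 V)
  neg _ := true

/-- `K̃_k`: the signed graph on `k` vertices with a positive and a negative edge
between each pair of distinct vertices. -/
def tildeK (k : ℕ) : SGraph (Fin k) := (⊤ : SimpleGraph (Fin k)).tildeS

/-- `(K_k, -)`: the all-negative complete signed graph on `k` vertices. -/
def allNegK (k : ℕ) : SGraph (Fin k) := (⊤ : SimpleGraph (Fin k)).allNeg

/-- `K̃_k⁺`: as `K̃_k`, with in addition a positive loop at every vertex. -/
def tildeKplus (k : ℕ) : SGraph (Fin k) where
  E := ((⊤ : SimpleGraph (Fin k)).edgeSet × Bool) ⊕ Fin k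
  ends := Sum.elim (fun e => (e.1 : Sym2 (Fin k))) (fun i => s(i, i))
  neg := Sum.elim (fun e => e.2) (fun _ => false)

/-- `G` has a `K_k`-minor: `k` disjoint connected branch sets, pairwise joined by an edge. -/
def SimpleGraph.HasCliqueMinor {V : Type} (G : SimpleGraph V) (k : ℕ) : Prop :=
  ∃ T : Fin k → G.Subgraph,
    (∀ i, (T i).coe.Connected) ∧
    (Pairwise fun i j => Disjoint (T i).verts (T j).verts) ∧
    ∀ i j, i ≠ j → ∃ u v, G.Adj u v ∧ u ∈ (T i).verts ∧ v ∈ (T j).verts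

/-- `G` has an odd-`K_k`-minor: a 2-coloring of the vertices together with `k`
disjoint trees, all of whose edges are properly colored, pairwise joined by a
monochromatic edge. -/
def SimpleGraph.HasOddCliqueMinor {V : Type} (G : SimpleGraph V) (k : ℕ) : Prop :=
  ∃ c : V → Bool, ∃ T : Fin k → G.Subgraph,
    (∀ i, (T i).coe.IsTree) ∧
    (Pairwise fun i j => Disjoint (T i).verts (T j).verts) ∧
    (∀ i, ∀ u v, (T i).Adj u v → c u ≠ c v) ∧
    ∀ i j, i ≠ j →
      ∃ u v, G.Adj u v ∧ u ∈ (T i).verts ∧ v ∈ (T j).verts ∧ c u = c v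

/-- `G` has an even-odd-`K_k`-minor: as an odd-`K_k`-minor, with in addition a
properly colored edge between each pair of distinct trees. -/
def SimpleGraph.HasEvenOddCliqueMinor {V : Type} (G : SimpleGraph V) (k : ℕ) : Prop :=
  ∃ c : V → Bool, ∃ T : Fin k → G.Subgraph,
    (∀ i, (T i).coe.IsTree) ∧
    (Pairwise fun i j => Disjoint (T i).verts (T j).verts) ∧
    (∀ i, ∀ u v, (T i).Adj u v → c u ≠ c v) ∧
    ∀ i j, i ≠ j →
      (∃ u v, G.Adj u v ∧ u ∈ (T i).verts ∧ v ∈ (T j).verts ∧ c u = c v) ∧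
      (∃ u v, G.Adj u v ∧ u ∈ (T i).verts ∧ v ∈ (T j).verts ∧ c u ≠ c v)

/-- The fractional chromatic number of a finite graph: the infimum total weight of
a system of nonnegative weights on independent sets covering every vertex with
total weight at least 1. -/
noncomputable def SimpleGraph.fracChrom {V : Type} [Fintype V] [DecidableEq V]
    (G : SimpleGraph V) : ℝ :=
  sInf {r : ℝ | ∃ w : Finset V → ℝ, (∀ A, 0 ≤ w A) ∧
    (∀ A : Finset V, w A ≠ 0 → (∀ u ∈ A, ∀ v ∈ A, ¬G.Adj u v)) ∧
    (∀ v : V, 1 ≤ ∑ A : Finset V, if v ∈ A then w A else 0) ∧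
    ∑ A : Finset V, w A ≤ r}

/-- The fractional balanced chromatic number of a finite signed graph: the infimum
total weight of a system of nonnegative weights on balanced sets covering every
vertex with total weight at least 1. -/
noncomputable def SGraph.fracChromB {V : Type} [Fintype V] [DecidableEq V]
    (G : SGraph V) : ℝ :=
  sInf {r : ℝ | ∃ w : Finset V → ℝ, (∀ A, 0 ≤ w A) ∧
    (∀ A : Finset V, w A ≠ 0 → G.BalancedSet ↑A) ∧
    (∀ v : V, 1 ≤ ∑ A : Finset V, if v ∈ A then w A else 0) ∧
    ∑ A : Finset V, w A ≤ r}


/-! Call a switching of `G` together with a partition of its vertices *balanced* if every class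
is connected and contains only positive edges after the switching. Contracting the classes then
gives a minor of `G`, and mapping every vertex to its class is a homomorphism. Balanced partitions
are ordered by coarsening, with switchings that agree up to a constant on every old class; a chain
has an upper bound (its union, with a switching read off relative to a representative of each
class), so by Zorn's lemma there is a maximal one. If two of its classes were joined by edges of
one sign only, switching one of them would make all those edges positive, and the two classes
could be merged. Hence any two adjacent classes are joined by edges of both signs. -/

namespace Setoid

variable {α : Type*}

def glue (r : Setoid α) (a b : α) : Setoid α where
  r x y := r x y ∨ (r x a ∧ r b y) ∨ (r x b ∧ r a y)
  iseqv := by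
    refine ⟨fun x => Or.inl (r.refl' x), ?_, ?_⟩
    · rintro x y (h | ⟨h₁, h₂⟩ | ⟨h₁, h₂⟩)
      · exact Or.inl (r.symm' h)
      · exact Or.inr (Or.inr ⟨r.symm' h₂, r.symm' h₁⟩)
      · exact Or.inr (Or.inl ⟨r.symm' h₂, r.symm' h₁⟩)
    · rintro x y z (h | ⟨h₁, h₂⟩ | ⟨h₁, h₂⟩) (g | ⟨g₁, g₂⟩ | ⟨g₁, g₂⟩)
      · exact Or.inl (r.trans' h g)
      · exact Or.inr (Or.inl ⟨r.trans' h g₁, g₂⟩)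
      · exact Or.inr (Or.inr ⟨r.trans' h g₁, g₂⟩)
      · exact Or.inr (Or.inl ⟨h₁, r.trans' h₂ g⟩)
      · exact Or.inr (Or.inl ⟨h₁, g₂⟩)
      · exact Or.inl (r.trans' h₁ g₂)
      · exact Or.inr (Or.inr ⟨h₁, r.trans' h₂ g⟩)
      · exact Or.inl (r.trans' h₁ g₂)
      · exact Or.inr (Or.inr ⟨h₁, g₂⟩)

theorem glue_iff {r : Setoid α} {a b x y : α} :
    r.glue a b x y ↔ r x y ∨ (r x a ∧ r b y) ∨ (r x b ∧ r a y) :=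
  Iff.rfl

theorem le_glue (r : Setoid α) (a b : α) : r ≤ r.glue a b :=
  fun _ _ h => Or.inl h

theorem glue_rel (r : Setoid α) (a b : α) : r.glue a b a b :=
  Or.inr (Or.inl ⟨r.refl' a, r.refl' b⟩)

theorem sSup_iff_of_directedOn {S : Set (Setoid α)} (hS : DirectedOn (· ≤ ·) S)
    (hne : S.Nonempty) {x y : α} : sSup S x y ↔ ∃ r ∈ S, r x y := by
  refine ⟨fun h => ?_, fun ⟨r, hr, h⟩ => le_sSup hr h⟩
  replace h : Relation.EqvGen (fun x y => ∃ r ∈ S, r x y) x y := by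
    rwa [sSup_eq_eqvGen] at h
  induction h with
  | rel _ _ h => exact h
  | refl x =>
    obtain ⟨r, hr⟩ := hne
    exact ⟨r, hr, r.refl' x⟩
  | symm _ _ _ ih =>
    obtain ⟨r, hr, h⟩ := ih
    exact ⟨r, hr, r.symm' h⟩
  | trans _ _ _ _ _ ih₁ ih₂ =>
    obtain ⟨r₁, hr₁, h₁⟩ := ih₁
    obtain ⟨r₂, hr₂, h₂⟩ := ih₂
    obtain ⟨r, hr, hr₁r, hr₂r⟩ := hS r₁ hr₁ r₂ hr₂
    exact ⟨r, hr, r.trans' (hr₁r h₁) (hr₂r h₂)⟩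

end Setoid

theorem Sym2.exists_eq_mk_of_map_eq {α β : Type*} {f : α → β} {z : Sym2 α} {x y : β}
    (h : z.map f = s(x, y)) : ∃ u v, z = s(u, v) ∧ f u = x ∧ f v = y := by
  induction z using Sym2.ind with
  | _ u v =>
    rcases Sym2.eq_iff.1 ((Sym2.map_mk f u v).symm.trans h) with ⟨hu, hv⟩ | ⟨hu, hv⟩
    · exact ⟨u, v, rfl, hu, hv⟩
    · exact ⟨v, u, Sym2.eq_swap, hv, hu⟩

namespace SGraph

variable {V : Type} {G : SGraph V}

theorem switch_neg_eq {s : V → Bool} {e : G.E} {u v : V} (h : G.ends e = s(u, v)) :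
    (G.switch s).neg e = (G.neg e ^^ (s u ^^ s v)) := by
  simp [switch, h]

namespace Walk

theorem start_mem_support : ∀ {u v : V} (p : G.Walk u v), u ∈ p.support
  | _, _, .nil => List.mem_singleton_self _
  | _, _, .cons _ _ _ => List.mem_cons_self

def append : {u v w : V} → G.Walk u v → G.Walk v w → G.Walk u w
  | _, _, _, .nil, q => q
  | _, _, _, .cons e h p, q => .cons e h (p.append q)

theorem mem_support_append {u v w x : V} (p : G.Walk u v) (q : G.Walk v w)
    (hx : x ∈ (p.append q).support) : x ∈ p.support ∨ x ∈ q.support := by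
  induction p with
  | nil => exact Or.inr hx
  | cons e h p ih =>
    rcases List.mem_cons.1 hx with rfl | hx
    · exact Or.inl List.mem_cons_self
    · exact (ih q hx).imp (List.mem_cons_of_mem _) id

theorem exists_ends_of_mem_edges {u v : V} (p : G.Walk u v) {e : G.E} (he : e ∈ p.edges) :
    ∃ a b, G.ends e = s(a, b) ∧ a ∈ p.support ∧ b ∈ p.support := by
  induction p with
  | nil => simp [edges] at he
  | cons e' h p ih =>
    rcases List.mem_cons.1 he with rfl | he
    · exact ⟨_, _, h, List.mem_cons_self, List.mem_cons_of_mem _ p.start_mem_support⟩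
    · obtain ⟨a, b, hab, ha, hb⟩ := ih he
      exact ⟨a, b, hab, List.mem_cons_of_mem _ ha, List.mem_cons_of_mem _ hb⟩

def toSwitch (s : V → Bool) : {u v : V} → G.Walk u v → (G.switch s).Walk u v
  | _, _, .nil => .nil
  | _, _, .cons e h p => .cons e h (p.toSwitch s)

@[simp]
theorem support_toSwitch (s : V → Bool) {u v : V} (p : G.Walk u v) :
    (p.toSwitch s).support = p.support := by
  induction p with
  | nil => rfl
  | cons e h p ih => simp only [toSwitch, support, ih]

@[simp]
theorem edges_toSwitch (s : V → Bool) {u v : V} (p : G.Walk u v) :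
    (p.toSwitch s).edges = p.edges := by
  induction p with
  | nil => rfl
  | cons e h p ih => simp only [toSwitch, edges, ih]; rfl

end Walk

structure BalancedPartition (G : SGraph V) where
  sw : V → Bool
  rel : Setoid V
  switch_neg_eq_false :
    ∀ e u v, G.ends e = s(u, v) → rel u v → (G.switch sw).neg e = false
  exists_walk : ∀ u v, rel u v → ∃ w : G.Walk u v, ∀ x ∈ w.support, rel u x

namespace BalancedPartition

instance : Preorder (BalancedPartition G) where
  le P Q := P.rel ≤ Q.rel ∧ ∀ u v, P.rel u v → (P.sw u ^^ P.sw v) = (Q.sw u ^^ Q.sw v)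
  le_refl _ := ⟨le_rfl, fun _ _ _ => rfl⟩
  le_trans _ _ _ hPQ hQR :=
    ⟨hPQ.1.trans hQR.1, fun u v h => (hPQ.2 u v h).trans (hQR.2 u v (hPQ.1 h))⟩

def discrete (h : ¬ G.HasNegLoop) : BalancedPartition G where
  sw _ := false
  rel := ⊥
  switch_neg_eq_false e u v he (huv : u = v) := by
    subst huv
    rw [switch_neg_eq he]
    simpa using fun hneg => h ⟨e, ⟨u, he⟩, hneg⟩
  exists_walk u v (huv : u = v) := by
    subst huv
    exact ⟨.nil, fun x hx => (List.mem_singleton.1 hx).symm⟩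

theorem sSup_rel_iff {c : Set (BalancedPartition G)} (hc : DirectedOn (· ≤ ·) c)
    (hne : c.Nonempty) {u v : V} : sSup (rel '' c) u v ↔ ∃ P ∈ c, P.rel u v := by
  have hdir : DirectedOn (· ≤ ·) (rel '' c) := by
    rintro _ ⟨P, hP, rfl⟩ _ ⟨Q, hQ, rfl⟩
    obtain ⟨R, hR, hPR, hQR⟩ := hc P hP Q hQ
    exact ⟨R.rel, ⟨R, hR, rfl⟩, hPR.1, hQR.1⟩
  rw [Setoid.sSup_iff_of_directedOn hdir (hne.image _), Set.exists_mem_image]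

theorem exists_sw_of_directedOn {c : Set (BalancedPartition G)} (hc : DirectedOn (· ≤ ·) c)
    (hne : c.Nonempty) :
    ∃ sw : V → Bool, ∀ P ∈ c, ∀ u v, P.rel u v → (sw u ^^ sw v) = (P.sw u ^^ P.sw v) := by
  set rep : V → V := fun v => (Quotient.mk (sSup (rel '' c)) v).out
  have hrep : ∀ v, ∃ P ∈ c, P.rel v (rep v) := fun v =>
    (sSup_rel_iff hc hne).1 (Setoid.symm' _ (Quotient.mk_out v))
  choose Pv hPv hrelv using hrep
  refine ⟨fun v => ((Pv v).sw v ^^ (Pv v).sw (rep v)), fun P hP u v huv => ?_⟩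
  have hrep_eq : rep u = rep v :=
    congrArg Quotient.out (Quotient.sound ((sSup_rel_iff hc hne).2 ⟨P, hP, huv⟩))
  obtain ⟨Q₁, hQ₁, huQ₁, hvQ₁⟩ := hc _ (hPv u) _ (hPv v)
  obtain ⟨Q, hQ, hQ₁Q, hPQ⟩ := hc _ hQ₁ _ hP
  have huQ := le_trans huQ₁ hQ₁Q
  have hvQ := le_trans hvQ₁ hQ₁Q
  calc (((Pv u).sw u ^^ (Pv u).sw (rep u)) ^^ ((Pv v).sw v ^^ (Pv v).sw (rep v)))
      = ((Q.sw u ^^ Q.sw (rep u)) ^^ (Q.sw v ^^ Q.sw (rep u))) := by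
        rw [huQ.2 _ _ (hrelv u), hvQ.2 _ _ (hrelv v), hrep_eq]
    _ = (Q.sw u ^^ Q.sw v) := by simp [Bool.xor_left_comm, Bool.xor_comm]
    _ = (P.sw u ^^ P.sw v) := (hPQ.2 u v huv).symm

theorem bddAbove_of_isChain {c : Set (BalancedPartition G)} (hc : IsChain (· ≤ ·) c)
    (hne : c.Nonempty) : BddAbove c := by
  have hrel := fun u v => sSup_rel_iff hc.directedOn hne (u := u) (v := v)
  obtain ⟨sw, hsw⟩ := exists_sw_of_directedOn hc.directedOn hne
  refine ⟨⟨sw, sSup (rel '' c), fun e u v he huv => ?_, fun u v huv => ?_⟩,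
    fun P hP => ⟨le_sSup ⟨P, hP, rfl⟩, fun u v h => (hsw P hP u v h).symm⟩⟩
  · obtain ⟨P, hP, huv⟩ := (hrel u v).1 huv
    rw [switch_neg_eq he, hsw P hP u v huv, ← switch_neg_eq he]
    exact P.switch_neg_eq_false e u v he huv
  · obtain ⟨P, hP, huv⟩ := (hrel u v).1 huv
    obtain ⟨w, hw⟩ := P.exists_walk u v huv
    exact ⟨w, fun x hx => (hrel u x).2 ⟨P, hP, hw x hx⟩⟩

theorem exists_isMax (h : ¬ G.HasNegLoop) : ∃ P : BalancedPartition G, IsMax P :=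
  haveI : Nonempty (BalancedPartition G) := ⟨discrete h⟩
  zorn_le_nonempty fun _ hc hne => bddAbove_of_isChain hc hne

theorem exists_walk_of_ends_eq (P : BalancedPartition G) {e : G.E} {a b u v : V}
    (he : G.ends e = s(a, b)) (hu : P.rel u a) (hv : P.rel b v) :
    ∃ w : G.Walk u v, ∀ z ∈ w.support, P.rel u z ∨ P.rel v z := by
  obtain ⟨w₁, hw₁⟩ := P.exists_walk u a hu
  obtain ⟨w₂, hw₂⟩ := P.exists_walk b v hv
  refine ⟨w₁.append (.cons e he w₂), fun z hz => ?_⟩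
  rcases Walk.mem_support_append _ _ hz with hz | hz
  · exact Or.inl (hw₁ z hz)
  · rcases List.mem_cons.1 hz with rfl | hz
    · exact Or.inl hu
    · exact Or.inr (P.rel.trans' (P.rel.symm' hv) (hw₂ z hz))

/-- Switching the class of `y` by `c` makes every edge between the classes of `x` and `y`
positive, so the two classes can be merged. -/
theorem exists_le_rel_of_forall_switch_neg_eq (P : BalancedPartition G) {x y : V}
    (hxy : ¬ P.rel x y) {e₀ : G.E} (he₀ : G.ends e₀ = s(x, y)) (c : Bool)
    (hc : ∀ e u v, G.ends e = s(u, v) → P.rel u x → P.rel v y → (G.switch P.sw).neg e = c) :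
    ∃ Q : BalancedPartition G, P ≤ Q ∧ Q.rel x y := by
  classical
  set sw : V → Bool := fun v => if P.rel v y then (P.sw v ^^ c) else P.sw v
  have hsw : ∀ u v, P.rel u v → (sw u ^^ sw v) = (P.sw u ^^ P.sw v) := by
    intro u v huv
    by_cases hv : P.rel v y
    · simp [sw, hv, P.rel.trans' huv hv, Bool.xor_left_comm, Bool.xor_comm]
    · have hu : ¬ P.rel u y := fun h => hv (P.rel.trans' (P.rel.symm' huv) h)
      simp [sw, hu, hv]
  have hcross : ∀ e u v, G.ends e = s(u, v) → P.rel u x → P.rel v y →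
      (G.switch sw).neg e = false := by
    intro e u v he hu hv
    have hu' : ¬ P.rel u y := fun h => hxy (P.rel.trans' (P.rel.symm' hu) h)
    have hsign := hc e u v he hu hv
    rw [switch_neg_eq he] at hsign ⊢
    simp only [sw, hu', hv, if_true, if_false]
    rw [← hsign]
    simp [Bool.xor_left_comm]
  refine ⟨⟨sw, P.rel.glue x y, fun e u v he huv => ?_, fun u v huv => ?_⟩,
    ⟨P.rel.le_glue x y, fun u v h => (hsw u v h).symm⟩, P.rel.glue_rel x y⟩
  · rcases Setoid.glue_iff.1 huv with huv | ⟨hu, hv⟩ | ⟨hu, hv⟩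
    · rw [switch_neg_eq he, hsw u v huv, ← switch_neg_eq he]
      exact P.switch_neg_eq_false e u v he huv
    · exact hcross e u v he hu (P.rel.symm' hv)
    · exact hcross e v u (he.trans Sym2.eq_swap) (P.rel.symm' hv) hu
  · rcases Setoid.glue_iff.1 huv with huv | ⟨hu, hv⟩ | ⟨hu, hv⟩
    · obtain ⟨w, hw⟩ := P.exists_walk u v huv
      exact ⟨w, fun z hz => Or.inl (hw z hz)⟩
    · obtain ⟨w, hw⟩ := P.exists_walk_of_ends_eq he₀ hu hv
      exact ⟨w, fun z hz => (hw z hz).imp id fun h => Or.inl ⟨hu, P.rel.trans' hv h⟩⟩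
    · obtain ⟨w, hw⟩ := P.exists_walk_of_ends_eq (he₀.trans Sym2.eq_swap) hu hv
      exact ⟨w, fun z hz => (hw z hz).imp id fun h => Or.inr ⟨hu, P.rel.trans' hv h⟩⟩

theorem exists_switch_neg_eq_of_isMax {P : BalancedPartition G} (hP : IsMax P) {e : G.E}
    {x y : V} (he : G.ends e = s(x, y)) (hxy : ¬ P.rel x y) (b : Bool) :
    ∃ e' u v, G.ends e' = s(u, v) ∧ P.rel u x ∧ P.rel v y ∧ (G.switch P.sw).neg e' = b := by
  by_contra! hno
  obtain ⟨Q, hPQ, hQ⟩ := P.exists_le_rel_of_forall_switch_neg_eq hxy he (!b)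
    fun e' u v he' hu hv => Bool.eq_not.2 (hno e' u v he' hu hv)
  exact hxy ((hP hPQ).1 hQ)

end BalancedPartition

/-- Contraction of the classes of `r`: one edge of each sign is kept between two classes
(or at a class) wherever `G` has one. -/
def quotient (G : SGraph V) (r : Setoid V) : SGraph (Quotient r) where
  E := {p : Sym2 (Quotient r) × Bool //
    ∃ e, (G.ends e).map (Quotient.mk r) = p.1 ∧ G.neg e = p.2}
  ends p := p.1.1
  neg p := p.1.2

def quotientEdge (G : SGraph V) (r : Setoid V) (e : G.E) : (G.quotient r).E :=
  ⟨((G.ends e).map (Quotient.mk r), G.neg e), e, rfl, rfl⟩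

theorem quotientEdge_surjective (G : SGraph V) (r : Setoid V) :
    Function.Surjective (G.quotientEdge r) :=
  fun p => let ⟨e, h₁, h₂⟩ := p.2; ⟨e, Subtype.ext (Prod.ext h₁ h₂)⟩

theorem quotient_ends_quotientEdge (G : SGraph V) (r : Setoid V) {e : G.E} {u v : V}
    (he : G.ends e = s(u, v)) :
    (G.quotient r).ends (G.quotientEdge r e) = s(Quotient.mk r u, Quotient.mk r v) :=
  (congrArg (Sym2.map _) he).trans (Sym2.map_mk _ u v)

theorem homTo_switch_quotient (G : SGraph V) (s : V → Bool) (r : Setoid V) :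
    G.HomTo ((G.switch s).quotient r) :=
  ⟨s, Quotient.mk r, (G.switch s).quotientEdge r,
    fun _ _ _ he => ⟨(G.switch s).quotient_ends_quotientEdge r he, rfl⟩⟩

theorem not_hasNegLoop_quotient {K : SGraph V} {r : Setoid V}
    (h : ∀ e u v, K.ends e = s(u, v) → r u v → K.neg e = false) :
    ¬ (K.quotient r).HasNegLoop := by
  rintro ⟨p, ⟨x, hx⟩, hneg⟩
  obtain ⟨e, rfl⟩ := K.quotientEdge_surjective r p
  obtain ⟨u, v, he, hu, hv⟩ := Sym2.exists_eq_mk_of_map_eq hx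
  have hpos : K.neg e = false := h e u v he (Quotient.exact (hu.trans hv.symm))
  exact Bool.false_ne_true (hpos.symm.trans hneg)

theorem quotient_exists_ends_neg_eq {K : SGraph V} {r : Setoid V}
    (h : ∀ e u v, K.ends e = s(u, v) → ¬ r u v → ∀ b, ∃ e' u' v', K.ends e' = s(u', v') ∧
      r u' u ∧ r v' v ∧ K.neg e' = b)
    ⦃x y : Quotient r⦄ (hxy : x ≠ y)
    (hadj : ∃ p : (K.quotient r).E, (K.quotient r).ends p = s(x, y)) (b : Bool) :
    ∃ p : (K.quotient r).E, (K.quotient r).ends p = s(x, y) ∧ (K.quotient r).neg p = b := by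
  obtain ⟨p, hp⟩ := hadj
  obtain ⟨e, rfl⟩ := K.quotientEdge_surjective r p
  obtain ⟨u, v, he, rfl, rfl⟩ := Sym2.exists_eq_mk_of_map_eq hp
  obtain ⟨e', u', v', he', hu, hv, hb⟩ := h e u v he (fun huv => hxy (Quotient.sound huv)) b
  refine ⟨K.quotientEdge r e', ?_, hb⟩
  rw [K.quotient_ends_quotientEdge r he', Quotient.sound hu, Quotient.sound hv]

theorem BalancedPartition.isMinor_quotient (P : BalancedPartition G) :
    ((G.switch P.sw).quotient P.rel).IsMinor G := by
  have hsurj := (G.switch P.sw).quotientEdge_surjective P.rel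
  refine ⟨P.sw, fun x => {v | Quotient.mk P.rel v = x}, fun x => ?_,
    fun x y hxy => Set.disjoint_left.2 fun v hx hy => hxy (hx.symm.trans hy),
    Function.surjInv hsurj, Function.injective_surjInv hsurj, fun p x y hp => ?_⟩
  · obtain ⟨v₀, hv₀⟩ := Quotient.exists_rep x
    refine ⟨⟨v₀, hv₀⟩, fun a ha b hb => ?_⟩
    obtain ⟨w, hw⟩ := P.exists_walk a b (Quotient.exact (ha.trans hb.symm))
    refine ⟨w.toSwitch P.sw, fun z hz => ?_, fun e he => ?_⟩
    · rw [Walk.support_toSwitch] at hz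
      exact (Quotient.sound (hw z hz)).symm.trans ha
    · rw [Walk.edges_toSwitch] at he
      obtain ⟨c, d, hcd, hc, hd⟩ := w.exists_ends_of_mem_edges he
      exact P.switch_neg_eq_false e c d hcd (P.rel.trans' (P.rel.symm' (hw c hc)) (hw d hd))
  · have hη := Function.surjInv_eq hsurj p
    rw [← hη] at hp
    obtain ⟨u, v, he, hu, hv⟩ := Sym2.exists_eq_mk_of_map_eq hp
    exact ⟨congrArg (SGraph.neg _) hη, u, v, he, hu, hv⟩

end SGraph

/-- every signed graph `G` with no negative loop has a signed graph `H`
with no negative loop, in which every pair of distinct adjacent vertices is joined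
by a digon, that is both a minor and a homomorphic image of `G`. -/
theorem stmt8 {V : Type} (G : SGraph V) (h : ¬ G.HasNegLoop) :
    ∃ (W : Type) (H : SGraph W),
      ¬ H.HasNegLoop ∧
      (∀ u v : W, u ≠ v → (∃ e : H.E, H.ends e = s(u, v)) →
        (∃ e : H.E, H.ends e = s(u, v) ∧ H.neg e = false) ∧
        (∃ e : H.E, H.ends e = s(u, v) ∧ H.neg e = true)) ∧
      H.IsMinor G ∧ G.HomTo H := by
  obtain ⟨P, hP⟩ := BalancedPartition.exists_isMax h
  have hdigon := quotient_exists_ends_neg_eq (K := G.switch P.sw) (r := P.rel)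
    fun e u v he huv b => BalancedPartition.exists_switch_neg_eq_of_isMax hP he huv b
  exact ⟨Quotient P.rel, (G.switch P.sw).quotient P.rel,
    not_hasNegLoop_quotient P.switch_neg_eq_false,
    fun x y hxy hadj => ⟨hdigon hxy hadj false, hdigon hxy hadj true⟩,
    P.isMinor_quotient, G.homTo_switch_quotient P.sw P.rel⟩
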